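/- arXiv:2208.03539 — 2 statements merged into one kernel-verified Lean document; each statement's English description precedes it below -/
import Mathlib

section
/- Fix a positive integer m and work in the polynomial ring ℤ[α] in the indeterminates α_m, α_{m+1}, …. Then the matrix Ŝ^{(m)} = (Ŝ^{(m)}_{n,j}(α))_{n,j∈ℕ} = (D((m+1)n + j, j))_{n,j∈ℕ} of modified m-Stieltjes–Rogers polynomials is totally positive with respect to the coefficientwise order on ℤ[α]: for every p ≥ 1 and all strictly increasing tuples n_1 < ⋯ < n_p and j_1 < ⋯ < j_p in ℕ, every coefficient of det((Ŝ^{(m)}_{n_a, j_b}(α))_{1≤a,b≤p}) is a nonnegative integer. -/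
/-!
Truncated to the columns `0, …, N`, the matrix `Ŝ` factors as `O · U`, where `U = ([k ≤ j + m])`
is a 0/1 staircase and `O` is the output matrix of the production matrix `Q = U · diag(α)`: row `n`
of `O` is `e₀ Qⁿ`. Indeed `e₀ U` is the all-ones row `Ŝ_{0,•}`, and `Qⁿ⁺¹ U = Qⁿ U · (diag(α) U)`,
where right multiplication by `diag(α) U` is the recurrence `Ŝ_{n+1,j} = ∑_{k=m}^{j+m} α_k Ŝ_{n,k}`
obtained by cutting a path at its last fall.

Total positivity is preserved by products (Cauchy–Binet), 0/1 staircases and diagonal matrices with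
entries in the positive cone are totally positive, and the output matrix of a totally positive
production matrix is totally positive: a minor either contains the row `e₀`, along which it is
expanded, or consists of rows of `O · Q`.
-/

open Finset

/-- `dyckD m α x y` is the generating polynomial of partial `m`-Dyck paths from `(0,0)` to
`(x,y)`: paths using steps `(1,1)` of weight `1` and `(1,-m)` of weight `α i` when the fall
starts at height `i`. -/
def dyckD {R : Type*} [CommRing R] (m : ℕ) (α : ℕ → R) : ℕ → ℕ → R
  | 0, 0 => 1
  | 0, _ + 1 => 0
  | x + 1, 0 => α m * dyckD m α x m
  | x + 1, y + 1 => dyckD m α x y + α (y + 1 + m) * dyckD m α x (y + 1 + m)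

open Matrix

namespace Matrix

variable {R ι κ ν α : Type*} [CommRing R]

theorem det_mul_eq_sum_prod_mul_det_submatrix [Fintype ι] [DecidableEq ι] {p : ℕ}
    (A : Matrix (Fin p) ι R) (B : Matrix ι (Fin p) R) :
    (A * B).det = ∑ f : Fin p → ι, (∏ b, B (f b) b) * (A.submatrix id f).det := by
  simp only [det_apply', mul_apply, Fintype.prod_sum, prod_mul_distrib, mul_sum, submatrix_apply,
    id]
  rw [sum_comm]
  exact sum_congr rfl fun f _ => sum_congr rfl fun σ _ => by ring

theorem sum_injective_eq_sum_strictMono_perm [Fintype ι] [LinearOrder ι] {p : ℕ} {M : Type*}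
    [AddCommMonoid M] (F : (Fin p → ι) → M) :
    ∑ f with Function.Injective f, F f =
      ∑ g with StrictMono g, ∑ σ : Equiv.Perm (Fin p), F (g ∘ σ) := by
  rw [← sum_product']
  symm
  refine sum_bij (fun gσ _ => gσ.1 ∘ gσ.2) ?_ ?_ ?_ fun _ _ => rfl
  · intro ⟨g, σ⟩ h
    simp only [mem_product, mem_filter, mem_univ, true_and] at h ⊢
    exact h.1.injective.comp σ.injective
  · intro ⟨g, σ⟩ h ⟨g', σ'⟩ h' heq
    simp only [mem_product, mem_filter, mem_univ, true_and, and_true] at h h' heq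
    have hg : g = g' := by
      rw [← StrictMono.range_inj h h', ← σ.surjective.range_comp g, heq, σ'.surjective.range_comp]
    subst hg
    exact Prod.ext rfl (Equiv.ext fun b => h.injective (congrFun heq b))
  · intro f hf
    simp only [mem_filter, mem_univ, true_and] at hf
    refine ⟨(f ∘ Tuple.sort f, (Tuple.sort f).symm), ?_, ?_⟩
    · simp only [mem_product, mem_filter, mem_univ, true_and, and_true]
      exact (Tuple.monotone_sort f).strictMono_of_injective (hf.comp (Tuple.sort f).injective)
    · ext b
      simp

/-- The Cauchy–Binet formula. -/
theorem det_mul_eq_sum_strictMono [Fintype ι] [LinearOrder ι] {p : ℕ} (A : Matrix (Fin p) ι R)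
    (B : Matrix ι (Fin p) R) :
    (A * B).det = ∑ g with StrictMono g, (A.submatrix id g).det * (B.submatrix g id).det := by
  classical
  rw [det_mul_eq_sum_prod_mul_det_submatrix, ← sum_filter_of_ne (p := Function.Injective),
    sum_injective_eq_sum_strictMono_perm]
  · refine sum_congr rfl fun g _ => ?_
    simp_rw [det_apply' (B.submatrix g id), mul_sum]
    refine sum_congr rfl fun σ _ => ?_
    rw [show A.submatrix id (g ∘ σ) = (A.submatrix id g).submatrix id σ from rfl, det_permute']
    simp only [submatrix_apply, Function.comp_apply, id]
    ring
  · intro f _ hf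
    by_contra hinj
    obtain ⟨a, b, hab, hne⟩ := Function.not_injective_iff.mp hinj
    exact hf (by rw [det_zero_of_column_eq hne fun i => by simp [hab], mul_zero])

/-- Total positivity with respect to the order whose positive cone is the subsemiring `S`. -/
def TotallyPositive [LinearOrder ι] [LinearOrder κ] (S : Subsemiring R) (A : Matrix ι κ R) :
    Prop :=
  ∀ (p : ℕ) (r : Fin p → ι) (c : Fin p → κ), StrictMono r → StrictMono c →
    (A.submatrix r c).det ∈ S

namespace TotallyPositive

variable [LinearOrder ι] [LinearOrder κ] {S : Subsemiring R}

theorem mul [Fintype κ] [LinearOrder ν] {A : Matrix ι κ R} {B : Matrix κ ν R}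
    (hA : TotallyPositive S A) (hB : TotallyPositive S B) : TotallyPositive S (A * B) := by
  intro p r c hr hc
  rw [show (A * B).submatrix r c = A.submatrix r id * B.submatrix id c from rfl,
    det_mul_eq_sum_strictMono]
  exact sum_mem fun g hg => mul_mem (hA p r g hr (mem_filter.mp hg).2)
    (hB p g c (mem_filter.mp hg).2 hc)

theorem mul_diagonal [Fintype κ] {A : Matrix ι κ R} (hA : TotallyPositive S A) {d : κ → R}
    (hd : ∀ j, d j ∈ S) : TotallyPositive S (A * diagonal d) := by
  intro p r c hr hc
  rw [show (A * diagonal d).submatrix r c = A.submatrix r c * diagonal (d ∘ c) by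
    ext; simp, det_mul, det_diagonal]
  exact mul_mem (hA p r c hr hc) (prod_mem fun b _ => hd (c b))

end TotallyPositive

theorem det_eq_mul_det_submatrix_succ_of_row_zero {q : ℕ}
    {M : Matrix (Fin (q + 1)) (Fin (q + 1)) R} (h : ∀ b ≠ 0, M 0 b = 0) :
    M.det = M 0 0 * (M.submatrix Fin.succ Fin.succ).det := by
  rw [det_succ_row_zero, sum_eq_single 0 (fun b _ hb => by rw [h b hb, mul_zero, zero_mul])
    (by simp)]
  simp

theorem det_eq_mul_det_submatrix_succ_of_col_zero {q : ℕ}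
    {M : Matrix (Fin (q + 1)) (Fin (q + 1)) R} (h : ∀ a ≠ 0, M a 0 = 0) :
    M.det = M 0 0 * (M.submatrix Fin.succ Fin.succ).det := by
  rw [← det_transpose, det_eq_mul_det_submatrix_succ_of_row_zero h, ← det_transpose]
  rfl

theorem det_of_le_eq_zero_or_one [LinearOrder α] {p : ℕ} {u w : Fin p → α} (hu : Monotone u)
    (hw : Monotone w) :
    (of fun a b => if u a ≤ w b then (1 : R) else 0).det = 0 ∨
      (of fun a b => if u a ≤ w b then (1 : R) else 0).det = 1 := by
  induction p with
  | zero => exact Or.inr det_fin_zero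
  | succ q ih =>
    set M : Matrix (Fin (q + 1)) (Fin (q + 1)) R := of fun a b => if u a ≤ w b then 1 else 0
    by_cases h00 : u 0 ≤ w 0
    · by_cases hrow : ∃ a ≠ 0, u a ≤ w 0
      · obtain ⟨a, ha0, ha⟩ := hrow
        -- rows `0` and `a` are both identically `1`
        refine Or.inl (det_zero_of_row_eq (Ne.symm ha0) (funext fun b => ?_))
        have hb : w 0 ≤ w b := hw (Fin.zero_le b)
        simp [M, h00.trans hb, ha.trans hb]
      · push Not at hrow
        have hcol : ∀ a ≠ 0, M a 0 = 0 := fun a ha => by simp [M, hrow a ha]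
        rw [det_eq_mul_det_submatrix_succ_of_col_zero hcol, show M 0 0 = 1 by simp [M, h00],
          one_mul]
        exact ih (hu.comp Fin.strictMono_succ.monotone) (hw.comp Fin.strictMono_succ.monotone)
    · refine Or.inl (det_eq_zero_of_column_eq_zero 0 fun a => ?_)
      have : ¬ u a ≤ w 0 := fun h => h00 ((hu (Fin.zero_le a)).trans h)
      simp [M, this]

theorem totallyPositive_of_le [LinearOrder ι] [LinearOrder κ] [LinearOrder α]
    (S : Subsemiring R) {f : ι → α} {g : κ → α} (hf : Monotone f) (hg : Monotone g) :
    TotallyPositive S (of fun i j => if f i ≤ g j then (1 : R) else 0) := by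
  intro p r c hr hc
  change (of fun a b => if (f ∘ r) a ≤ (g ∘ c) b then (1 : R) else 0).det ∈ S
  rcases det_of_le_eq_zero_or_one (R := R) (hf.comp hr.monotone) (hg.comp hc.monotone)
    with h | h <;> rw [h]
  exacts [zero_mem S, one_mem S]

/-- The output matrix of the production matrix `Q`, with initial row `e_⊥`. -/
def outputMatrix [Fintype κ] [LinearOrder κ] [OrderBot κ] (Q : Matrix κ κ R) : Matrix ℕ κ R :=
  of fun n j => (Q ^ n) ⊥ j

theorem outputMatrix_submatrix_add_one [Fintype κ] [LinearOrder κ] [OrderBot κ]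
    (Q : Matrix κ κ R) {p : ℕ} (r : Fin p → ℕ) (c : Fin p → κ) :
    Q.outputMatrix.submatrix (fun a => r a + 1) c =
      Q.outputMatrix.submatrix r id * Q.submatrix id c := by
  ext a b
  exact congrFun (congrFun (pow_succ Q (r a)) _) _

theorem TotallyPositive.outputMatrix [Fintype κ] [LinearOrder κ] [OrderBot κ]
    {S : Subsemiring R} {Q : Matrix κ κ R} (hQ : TotallyPositive S Q) :
    TotallyPositive S Q.outputMatrix := by
  intro p
  induction p with
  | zero =>
    intro r c _ _
    rw [det_fin_zero]
    exact one_mem S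
  | succ q ihq =>
    intro r c hr hc
    obtain ⟨k, hk⟩ : ∃ k, r 0 = k := ⟨_, rfl⟩
    induction k generalizing r c with
    | zero =>
      have htop : ∀ b, Q.outputMatrix.submatrix r c 0 b = if ⊥ = c b then 1 else 0 := by
        intro b
        simp [Matrix.outputMatrix, hk, one_apply]
      rw [det_eq_mul_det_submatrix_succ_of_row_zero fun b hb => ?_]
      · refine mul_mem ?_ (ihq _ _ (hr.comp Fin.strictMono_succ) (hc.comp Fin.strictMono_succ))
        rw [htop]
        split_ifs
        exacts [one_mem S, zero_mem S]
      · rw [htop, if_neg]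
        exact (bot_le.trans_lt (hc (Fin.pos_iff_ne_zero.mpr hb))).ne
    | succ k ihk =>
      obtain ⟨r, rfl⟩ : ∃ r' : Fin (q + 1) → ℕ, r = fun a => r' a + 1 :=
        ⟨fun a => r a - 1, funext fun a => by
          have := hr.monotone (Fin.zero_le a); dsimp only; omega⟩
      rw [outputMatrix_submatrix_add_one, det_mul_eq_sum_strictMono]
      exact sum_mem fun g hg => mul_mem
        (ihk r g (fun a b h => Nat.succ_lt_succ_iff.mp (hr h)) (mem_filter.mp hg).2
          (by simpa using hk))
        (hQ _ g c (mem_filter.mp hg).2 hc)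

end Matrix

section Dyck

variable {R : Type*} [CommRing R] (m : ℕ) (α : ℕ → R)

theorem dyckD_eq_zero_of_lt {x y : ℕ} (h : x < y) : dyckD m α x y = 0 := by
  induction x generalizing y with
  | zero => obtain _ | y := y <;> first | omega | rfl
  | succ x ih =>
    obtain _ | y := y
    · omega
    · rw [dyckD, ih (by omega), ih (by omega), mul_zero, add_zero]

/-- `Ŝ^{(m)}_{n,j}(α) = D((m+1)n + j, j)`. -/
def modifiedStieltjesRogers (n j : ℕ) : R :=
  dyckD m α ((m + 1) * n + j) j

theorem modifiedStieltjesRogers_zero (j : ℕ) : modifiedStieltjesRogers m α 0 j = 1 := by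
  rw [modifiedStieltjesRogers, mul_zero, zero_add]
  induction j with
  | zero => rfl
  | succ j ih => rw [dyckD, ih, dyckD_eq_zero_of_lt m α (by omega), mul_zero, add_zero]

theorem modifiedStieltjesRogers_succ (n j : ℕ) :
    modifiedStieltjesRogers m α (n + 1) j =
      ∑ k ∈ Icc m (j + m), α k * modifiedStieltjesRogers m α n k := by
  induction j with
  | zero =>
    rw [modifiedStieltjesRogers, show (m + 1) * (n + 1) + 0 = (m + 1) * n + m + 1 by ring, dyckD,
      zero_add, Icc_self, sum_singleton, modifiedStieltjesRogers]
  | succ j ih =>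
    rw [modifiedStieltjesRogers,
      show (m + 1) * (n + 1) + (j + 1) = (m + 1) * (n + 1) + j + 1 by ring, dyckD,
      ← modifiedStieltjesRogers, ih,
      show (m + 1) * (n + 1) + j = (m + 1) * n + (j + 1 + m) by ring, ← modifiedStieltjesRogers,
      show j + 1 + m = j + m + 1 by omega, sum_Icc_succ_top (by omega)]

def upperStaircase (N : ℕ) : Matrix (Fin (N + 1)) (Fin (N + 1)) R :=
  of fun k j => if (k : ℕ) ≤ j + m then 1 else 0

theorem upperStaircase_apply {N : ℕ} (k j : Fin (N + 1)) :
    upperStaircase (R := R) m N k j = if (k : ℕ) ≤ j + m then 1 else 0 :=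
  rfl

def fallWeight (k : ℕ) : R :=
  if m ≤ k then α k else 0

def productionMatrix (N : ℕ) : Matrix (Fin (N + 1)) (Fin (N + 1)) R :=
  upperStaircase m N * diagonal fun k : Fin (N + 1) => fallWeight m α k

theorem productionMatrix_pow_mul_upperStaircase_apply_zero {N n j : ℕ} (h : j + n * m + m ≤ N) :
    (productionMatrix m α N ^ n * upperStaircase m N : Matrix (Fin (N + 1)) (Fin (N + 1)) R) 0
      ⟨j, by omega⟩ = modifiedStieltjesRogers m α n j := by
  induction n generalizing j with
  | zero => simp [upperStaircase_apply, modifiedStieltjesRogers_zero]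
  | succ n ih =>
    set F : ℕ → R := fun k =>
      if m ≤ k ∧ k ≤ j + m then α k * modifiedStieltjesRogers m α n k else 0
    have hsplit : productionMatrix m α N ^ (n + 1) * upperStaircase m N =
        productionMatrix m α N ^ n * upperStaircase m N *
          ((diagonal fun k : Fin (N + 1) => fallWeight m α k) * upperStaircase m N) := by
      rw [pow_succ, Matrix.mul_assoc, Matrix.mul_assoc]
      exact congrArg _ (Matrix.mul_assoc _ _ _)
    rw [hsplit, mul_apply]
    calc ∑ k, _ = ∑ k : Fin (N + 1), F k := sum_congr rfl fun k _ => ?_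
      _ = ∑ k ∈ range (N + 1), F k := Fin.sum_univ_eq_sum_range F (N + 1)
      _ = ∑ k ∈ Icc m (j + m), α k * modifiedStieltjesRogers m α n k := by
        rw [← sum_filter]
        congr 1
        ext k
        simp only [mem_filter, mem_range, mem_Icc]
        omega
      _ = _ := (modifiedStieltjesRogers_succ m α n j).symm
    obtain ⟨k, hkN⟩ := k
    rw [diagonal_mul, upperStaircase_apply]
    simp only [fallWeight, F]
    by_cases hk : m ≤ k ∧ k ≤ j + m
    · rw [ih (by rw [Nat.succ_mul] at h; omega), if_pos hk.1, if_pos hk.2, if_pos hk, mul_one,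
        mul_comm]
    · rw [if_neg hk]
      rcases not_and_or.mp hk with hmk | hkj
      · rw [if_neg hmk, zero_mul, mul_zero]
      · rw [if_neg hkj, mul_zero, mul_zero]

end Dyck

section TotalPositivity

variable {R : Type*} [CommRing R] (m : ℕ) (α : ℕ → R)

theorem totallyPositive_upperStaircase (S : Subsemiring R) (N : ℕ) :
    TotallyPositive S (upperStaircase (R := R) m N) :=
  totallyPositive_of_le S (f := fun k : Fin (N + 1) => (k : ℕ))
    (g := fun j : Fin (N + 1) => (j : ℕ) + m) Fin.val_strictMono.monotone
    fun _ _ h => Nat.add_le_add_right h m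

theorem totallyPositive_productionMatrix {S : Subsemiring R} (hα : ∀ i, α i ∈ S) (N : ℕ) :
    TotallyPositive S (productionMatrix m α N) :=
  (totallyPositive_upperStaircase m S N).mul_diagonal fun k => by
    unfold fallWeight
    split_ifs
    exacts [hα k, zero_mem S]

end TotalPositivity

namespace MvPolynomial

variable (σ R : Type*) [CommRing R] [PartialOrder R] [IsOrderedRing R]

def nonnegCoeffs : Subsemiring (MvPolynomial σ R) where
  carrier := {f | ∀ d, 0 ≤ f.coeff d}
  zero_mem' d := by simp
  one_mem' d := by
    classical
    rw [coeff_one]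
    split_ifs
    exacts [zero_le_one, le_rfl]
  add_mem' ha hb d := by
    rw [coeff_add]
    exact add_nonneg (ha d) (hb d)
  mul_mem' ha hb d := by
    classical
    rw [coeff_mul]
    exact sum_nonneg fun x _ => mul_nonneg (ha _) (hb _)

variable {σ R}

theorem X_mem_nonnegCoeffs (i : σ) : X i ∈ nonnegCoeffs σ R := fun d => by
  classical
  rw [coeff_X]
  split_ifs
  exacts [zero_le_one, le_rfl]

end MvPolynomial

theorem stmt2_general (m : ℕ) (p : ℕ)
    (ri cj : Fin p → ℕ) (hri : StrictMono ri) (hcj : StrictMono cj) (d : ℕ →₀ ℕ) :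
    0 ≤ MvPolynomial.coeff d
        (Matrix.det (Matrix.of fun x y : Fin p =>
          dyckD m (fun i => (MvPolynomial.X i : MvPolynomial ℕ ℤ))
            ((m + 1) * ri x + cj y) (cj y))) := by
  set α : ℕ → MvPolynomial ℕ ℤ := fun i => MvPolynomial.X i
  set N := ∑ b, cj b + (∑ a, ri a) * m + m
  have hbound : ∀ a b, cj b + ri a * m + m ≤ N := fun a b => by
    have := single_le_sum (fun b _ => Nat.zero_le (cj b)) (mem_univ b)
    have := Nat.mul_le_mul_right m (single_le_sum (fun a _ => Nat.zero_le (ri a)) (mem_univ a))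
    omega
  set c : Fin p → Fin (N + 1) := fun b => ⟨cj b, by have := hbound b b; omega⟩
  have hfactor : (of fun x y : Fin p => dyckD m α ((m + 1) * ri x + cj y) (cj y)) =
      ((productionMatrix m α N).outputMatrix * upperStaircase m N).submatrix ri c := by
    ext a b : 1
    exact (productionMatrix_pow_mul_upperStaircase_apply_zero m α (hbound a b)).symm
  rw [hfactor]
  exact ((totallyPositive_productionMatrix m α MvPolynomial.X_mem_nonnegCoeffs N).outputMatrix.mul
    (totallyPositive_upperStaircase m _ N)) p ri c hri (fun a b h => hcj h) d

/-- The matrix `Ŝ^{(m)} = (Ŝ^{(m)}_{n,j}(α))_{n,j} = (D((m+1)n + j, j))_{n,j}` of modified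
`m`-Stieltjes–Rogers polynomials over `ℤ[α]` (the polynomial ring `MvPolynomial ℕ ℤ`, where
the variable `X i` stands for `α_i`) is coefficientwise totally positive: every minor
(with rows and columns chosen in strictly increasing order) is a polynomial with
nonnegative coefficients. -/
theorem stmt2 (m : ℕ) (hm : 0 < m) (p : ℕ) (hp : 1 ≤ p)
    (ri cj : Fin p → ℕ) (hri : StrictMono ri) (hcj : StrictMono cj) (d : ℕ →₀ ℕ) :
    0 ≤ MvPolynomial.coeff d
        (Matrix.det (Matrix.of fun x y : Fin p =>
          dyckD m (fun i => (MvPolynomial.X i : MvPolynomial ℕ ℤ))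
            ((m + 1) * ri x + cj y) (cj y))) :=
  stmt2_general m p ri cj hri hcj d
end

section
/- Let K be a field of characteristic zero, p ∈ ℕ, n ∈ ℕ, and m_1, …, m_p ∈ ℕ with m := m_1 + ⋯ + m_p ≤ n. Let c_1, …, c_p, d ∈ K be such that c_i + q ≠ 0 for all integers 0 ≤ q ≤ n−1 and all i, and d + q ≠ 0 for all integers 1 ≤ q ≤ n. Then: (i) Σ_{j=0}^{n} (−n)_j · ∏_{i=1}^{p} (c_i + m_i)_j / ( j! · ∏_{i=1}^{p} (c_i)_j ) equals 0 if m ≤ n−1, and equals (−1)^n · n! / ∏_{i=1}^{p} (c_i)_{m_i} if m = n; and (ii) (Minton's formula) Σ_{j=0}^{n} (−n)_j · (d)_j · ∏_{i=1}^{p} (c_i + m_i)_j / ( j! · (d+1)_j · ∏_{i=1}^{p} (c_i)_j ) = n! · ∏_{i=1}^{p} (c_i − d)_{m_i} / ( (d+1)_n · ∏_{i=1}^{p} (c_i)_{m_i} ). -/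
/-!
Since `(-n)_j / j! = (-1)^j C(n, j)` and `(c + m)_j / (c)_j = (c + j)_m / (c)_m`, the `j`-th term
of the series (i) is `(-1)^j C(n, j) P(j) / ∏ (c_i)_{m_i}`, where `P(x) = ∏ (c_i + x)_{m_i}` is
monic of degree `m`. Thus (i) is an `n`-th forward difference of `P`, and such a difference of a
polynomial of degree `≤ n` is `n!` times its coefficient of `x^n`.

For (ii), moreover `(d)_j / (d + 1)_j = d / (d + j)`, and the partial fraction identity
`∑ (-1)^j C(n, j) P(j) / (d + j) = n! P(-d) / (d)_{n+1}` follows by applying the same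
forward-difference formula to the polynomial `(W(-d) P(x) - P(-d) W(x)) / (x + d)` of
degree `≤ n`, where `W(x) = x (x - 1) ⋯ (x - n)` vanishes at `0, …, n`.
-/

open Finset Polynomial

section Pochhammer

variable {S : Type*}

theorem ascPochhammer_eval_mul_eval_add [CommSemiring S] (a b : ℕ) (x : S) :
    (ascPochhammer S a).eval x * (ascPochhammer S b).eval (x + a)
      = (ascPochhammer S (a + b)).eval x := by
  simpa [eval_comp] using congrArg (eval x) (ascPochhammer_mul (S := S) a b)

theorem ascPochhammer_succ_eval_left [CommSemiring S] (n : ℕ) (x : S) :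
    (ascPochhammer S (n + 1)).eval x = x * (ascPochhammer S n).eval (x + 1) := by
  simp [ascPochhammer_succ_left, eval_comp]

theorem ascPochhammer_eval_ne_zero_of_le [CommRing S] [IsDomain S] {j n : ℕ} (hjn : j ≤ n)
    {x : S} (hx : (ascPochhammer S n).eval x ≠ 0) : (ascPochhammer S j).eval x ≠ 0 := by
  obtain ⟨k, rfl⟩ := Nat.exists_eq_add_of_le hjn
  rw [← ascPochhammer_eval_mul_eval_add] at hx
  exact left_ne_zero_of_mul hx

theorem ascPochhammer_eval_ne_zero_iff [CommRing S] [IsDomain S] {n : ℕ} {x : S} :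
    (ascPochhammer S n).eval x ≠ 0 ↔ ∀ k < n, x + k ≠ 0 := by
  simp [ascPochhammer_eval_eq_zero_iff, eq_neg_iff_add_eq_zero, add_comm]

theorem ascPochhammer_eval_add_natCast_div [Field S] {x : S} {m j : ℕ}
    (hj : (ascPochhammer S j).eval x ≠ 0) (hm : (ascPochhammer S m).eval x ≠ 0) :
    (ascPochhammer S j).eval (x + m) / (ascPochhammer S j).eval x
      = (ascPochhammer S m).eval (x + j) / (ascPochhammer S m).eval x := by
  rw [div_eq_div_iff hj hm, mul_comm, ascPochhammer_eval_mul_eval_add, mul_comm,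
    ascPochhammer_eval_mul_eval_add, add_comm]

theorem ascPochhammer_eval_neg_natCast_div_factorial [Field S] [CharZero S] (n j : ℕ) :
    (ascPochhammer S j).eval (-(n : S)) / j.factorial = (-1) ^ j * n.choose j := by
  rw [ascPochhammer_eval_neg_eq_descPochhammer, descPochhammer_eval_eq_descFactorial,
    Nat.descFactorial_eq_factorial_mul_choose, Nat.cast_mul, mul_div_assoc,
    mul_div_cancel_left₀ _ (Nat.cast_ne_zero.mpr j.factorial_ne_zero)]

end Pochhammer

namespace Polynomial

theorem fwdDiff_iter_eval_eq_factorial_mul_coeff {R : Type*} [CommRing R]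
    {P : R[X]} {n : ℕ} (hP : P.natDegree ≤ n) (x : R) :
    (fwdDiff 1)^[n] P.eval x = n.factorial * P.coeff n := by
  rcases hP.eq_or_lt with rfl | hlt
  · rw [P.fwdDiff_iter_degree_eq_factorial, Pi.smul_apply, smul_eq_mul, coeff_natDegree,
      mul_comm]
    rfl
  · rw [fwdDiff_iter_eq_zero_of_degree_lt hlt, coeff_eq_zero_of_natDegree_lt hlt, mul_zero]
    rfl

theorem sum_range_alternating_choose_mul_eval {R : Type*} [CommRing R]
    {P : R[X]} {n : ℕ} (hP : P.natDegree ≤ n) :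
    ∑ j ∈ range (n + 1), (-1) ^ j * (n.choose j : R) * P.eval (j : R)
      = (-1) ^ n * n.factorial * P.coeff n := by
  have h := fwdDiff_iter_eq_sum_shift 1 P.eval n 0
  rw [fwdDiff_iter_eval_eq_factorial_mul_coeff hP] at h
  rw [mul_assoc, h, mul_sum]
  refine sum_congr rfl fun j hj => ?_
  obtain ⟨k, rfl⟩ := Nat.exists_eq_add_of_le (Nat.lt_succ_iff.mp (mem_range.mp hj))
  have hsign : (-1 : R) ^ (j + k) * (-1) ^ (j + k - j) = (-1) ^ j := by
    rw [Nat.add_sub_cancel_left, pow_add, mul_assoc, ← pow_add, ← two_mul, pow_mul, neg_one_sq,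
      one_pow, mul_one]
  rw [zsmul_eq_mul, nsmul_one, zero_add]
  push_cast
  rw [← hsign]
  ring

theorem sum_range_alternating_choose_mul_eval_div {K : Type*} [Field K]
    {P : K[X]} {n : ℕ} (hP : P.natDegree ≤ n) {d : K}
    (hd : (ascPochhammer K (n + 1)).eval d ≠ 0) :
    ∑ j ∈ range (n + 1), (-1) ^ j * (n.choose j : K) * P.eval (j : K) / (d + j)
      = n.factorial * P.eval (-d) / (ascPochhammer K (n + 1)).eval d := by
  set W := descPochhammer K (n + 1)
  have hWA : W.eval (-d) = (-1) ^ (n + 1) * (ascPochhammer K (n + 1)).eval d := by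
    have h := ascPochhammer_eval_neg_eq_descPochhammer (R := K) (-d) (n + 1)
    rw [neg_neg] at h
    rw [h, ← mul_assoc, ← mul_pow, neg_one_mul, neg_neg, one_pow, one_mul]
  have hdj : ∀ j ≤ n, d + j ≠ 0 := fun j hj =>
    ascPochhammer_eval_ne_zero_iff.mp hd j (Nat.lt_succ_of_le hj)
  set N := C (W.eval (-d)) * P - C (P.eval (-d)) * W
  set S := N /ₘ (X - C (-d))
  have hNS : (X - C (-d)) * S = N := mul_divByMonic_eq_iff_isRoot.mpr (by simp [N, mul_comm])
  have hNdeg : N.natDegree ≤ n + 1 :=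
    (natDegree_sub_le _ _).trans <| max_le ((natDegree_C_mul_le _ _).trans (hP.trans n.le_succ))
      ((natDegree_C_mul_le _ _).trans (descPochhammer_natDegree _ _).le)
  have hSdeg : S.natDegree ≤ n := by
    rw [natDegree_divByMonic _ (monic_X_sub_C _), natDegree_X_sub_C]
    omega
  have hScoeff : S.coeff n = -P.eval (-d) := by
    have h := congrArg (coeff · (n + 1)) hNS
    simp only [mul_comm (X - C (-d)), coeff_mul_X_sub_C,
      coeff_eq_zero_of_natDegree_lt (hSdeg.trans_lt n.lt_succ_self), zero_mul, sub_zero] at h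
    rw [h]
    have hW1 : W.coeff (n + 1) = 1 := by
      simpa [descPochhammer_natDegree] using (monic_descPochhammer K (n + 1)).coeff_natDegree
    simp [N, hW1, coeff_eq_zero_of_natDegree_lt (hP.trans_lt n.lt_succ_self)]
  have hSeval : ∀ j ≤ n, S.eval (j : K) = W.eval (-d) * (P.eval (j : K) / (d + j)) := by
    intro j hj
    have h := congrArg (eval (j : K)) hNS
    simp only [N, W, map_neg, sub_neg_eq_add, eval_mul, eval_add, eval_X, eval_C, eval_sub,
      descPochhammer_eval_coe_nat_of_lt (Nat.lt_succ_of_le hj), mul_zero, sub_zero] at h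
    field_simp [hdj j hj]
    linear_combination h
  have key : W.eval (-d) *
        ∑ j ∈ range (n + 1), (-1) ^ j * (n.choose j : K) * P.eval (j : K) / (d + j)
      = (-1) ^ n * n.factorial * -P.eval (-d) := by
    rw [mul_sum, ← hScoeff, ← sum_range_alternating_choose_mul_eval hSdeg]
    refine sum_congr rfl fun j hj => ?_
    rw [hSeval j (Nat.lt_succ_iff.mp (mem_range.mp hj))]
    ring
  rw [hWA] at key
  rw [eq_div_iff hd]
  refine mul_left_cancel₀ (pow_ne_zero (n + 1) (neg_ne_zero.mpr (one_ne_zero (α := K)))) ?_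
  linear_combination key

end Polynomial

section HypergeometricSum

variable {ι K : Type*} [Field K]

noncomputable def pochhammerProd (s : Finset ι) (c : ι → K) (m : ι → ℕ) : K[X] :=
  ∏ i ∈ s, (ascPochhammer K (m i)).comp (X + C (c i))

variable {s : Finset ι} {c : ι → K} {m : ι → ℕ} {n : ℕ}

theorem eval_pochhammerProd (x : K) :
    (pochhammerProd s c m).eval x = ∏ i ∈ s, (ascPochhammer K (m i)).eval (c i + x) := by
  simp [pochhammerProd, eval_prod, eval_comp, add_comm]

theorem monic_pochhammerProd : (pochhammerProd s c m).Monic :=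
  monic_prod_of_monic _ _ fun i _ =>
    (monic_ascPochhammer K (m i)).comp (monic_X_add_C _) (by simp)

theorem natDegree_pochhammerProd : (pochhammerProd s c m).natDegree = ∑ i ∈ s, m i := by
  rw [pochhammerProd, natDegree_prod_of_monic _ _ fun i _ =>
    (monic_ascPochhammer K (m i)).comp (monic_X_add_C _) (by simp)]
  simp [natDegree_comp, ascPochhammer_natDegree]

theorem prod_ascPochhammer_eval_add_div_prod {j : ℕ} (hjn : j ≤ n)
    (hc : ∀ i ∈ s, (ascPochhammer K n).eval (c i) ≠ 0) (hm : ∀ i ∈ s, m i ≤ n) :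
    (∏ i ∈ s, (ascPochhammer K j).eval (c i + m i)) /
        ∏ i ∈ s, (ascPochhammer K j).eval (c i)
      = (pochhammerProd s c m).eval (j : K) / ∏ i ∈ s, (ascPochhammer K (m i)).eval (c i) := by
  rw [← prod_div_distrib, eval_pochhammerProd, ← prod_div_distrib]
  exact prod_congr rfl fun i hi => ascPochhammer_eval_add_natCast_div
    (ascPochhammer_eval_ne_zero_of_le hjn (hc i hi))
    (ascPochhammer_eval_ne_zero_of_le (hm i hi) (hc i hi))

variable [CharZero K]

theorem sum_hypergeometric_eq_coeff (hc : ∀ i ∈ s, (ascPochhammer K n).eval (c i) ≠ 0)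
    (hm : ∑ i ∈ s, m i ≤ n) :
    ∑ j ∈ range (n + 1), (ascPochhammer K j).eval (-(n : K)) *
          (∏ i ∈ s, (ascPochhammer K j).eval (c i + m i)) /
        (j.factorial * ∏ i ∈ s, (ascPochhammer K j).eval (c i))
      = (-1) ^ n * n.factorial * (pochhammerProd s c m).coeff n /
          ∏ i ∈ s, (ascPochhammer K (m i)).eval (c i) := by
  have hmi : ∀ i ∈ s, m i ≤ n := fun i hi =>
    (single_le_sum (fun _ _ => Nat.zero_le _) hi).trans hm
  rw [← sum_range_alternating_choose_mul_eval (natDegree_pochhammerProd.trans_le hm), sum_div]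
  refine sum_congr rfl fun j hj => ?_
  rw [mul_div_mul_comm, ascPochhammer_eval_neg_natCast_div_factorial,
    prod_ascPochhammer_eval_add_div_prod (Nat.lt_succ_iff.mp (mem_range.mp hj)) hc hmi,
    mul_div_assoc]

theorem sum_hypergeometric_minton (hc : ∀ i ∈ s, (ascPochhammer K n).eval (c i) ≠ 0)
    (hm : ∑ i ∈ s, m i ≤ n) {d : K} (hd : (ascPochhammer K n).eval (d + 1) ≠ 0) :
    ∑ j ∈ range (n + 1), (ascPochhammer K j).eval (-(n : K)) * (ascPochhammer K j).eval d *
          (∏ i ∈ s, (ascPochhammer K j).eval (c i + m i)) /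
        (j.factorial * (ascPochhammer K j).eval (d + 1) *
          ∏ i ∈ s, (ascPochhammer K j).eval (c i))
      = n.factorial * (∏ i ∈ s, (ascPochhammer K (m i)).eval (c i - d)) /
          ((ascPochhammer K n).eval (d + 1) * ∏ i ∈ s, (ascPochhammer K (m i)).eval (c i)) := by
  have hmi : ∀ i ∈ s, m i ≤ n := fun i hi =>
    (single_le_sum (fun _ _ => Nat.zero_le _) hi).trans hm
  have hD : ∏ i ∈ s, (ascPochhammer K (m i)).eval (c i) ≠ 0 :=
    prod_ne_zero_iff.mpr fun i hi => ascPochhammer_eval_ne_zero_of_le (hmi i hi) (hc i hi)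
  rcases eq_or_ne d 0 with rfl | hd0
  · rw [sum_eq_single_of_mem 0 (by simp) fun j _ hj => by
      simp [ascPochhammer_ne_zero_eval_zero K hj]]
    simp only [zero_add, sub_zero, ascPochhammer_eval_one]
    rw [div_self (mul_ne_zero (Nat.cast_ne_zero.mpr n.factorial_ne_zero) hD)]
    simp
  have hdsucc : (ascPochhammer K (n + 1)).eval d ≠ 0 := by
    rw [ascPochhammer_succ_eval_left]
    exact mul_ne_zero hd0 hd
  have hterm : ∀ j ∈ range (n + 1),
      (ascPochhammer K j).eval (-(n : K)) * (ascPochhammer K j).eval d *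
          (∏ i ∈ s, (ascPochhammer K j).eval (c i + m i)) /
        (j.factorial * (ascPochhammer K j).eval (d + 1) *
          ∏ i ∈ s, (ascPochhammer K j).eval (c i))
      = d / (∏ i ∈ s, (ascPochhammer K (m i)).eval (c i)) *
          ((-1) ^ j * n.choose j * (pochhammerProd s c m).eval (j : K) / (d + j)) := by
    intro j hj
    have hjn : j ≤ n := Nat.lt_succ_iff.mp (mem_range.mp hj)
    have hshift : (ascPochhammer K j).eval d / (ascPochhammer K j).eval (d + 1) = d / (d + j) :=
      (div_eq_div_iff (ascPochhammer_eval_ne_zero_of_le hjn hd)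
        (ascPochhammer_eval_ne_zero_iff.mp hdsucc j (by omega))).mpr
        (by rw [← ascPochhammer_succ_eval, ascPochhammer_succ_eval_left])
    rw [mul_div_mul_comm, mul_div_mul_comm, ascPochhammer_eval_neg_natCast_div_factorial, hshift,
      prod_ascPochhammer_eval_add_div_prod hjn hc hmi]
    ring
  rw [sum_congr rfl hterm, ← mul_sum,
    sum_range_alternating_choose_mul_eval_div (natDegree_pochhammerProd.trans_le hm) hdsucc,
    eval_pochhammerProd, ascPochhammer_succ_eval_left]
  simp_rw [← sub_eq_add_neg]
  field_simp

end HypergeometricSum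

/-- Evaluations of terminating hypergeometric series at 1:
(i) `p+1F_p(−n, c_1+m_1,…,c_p+m_p; c_1,…,c_p; 1)` equals `0` if `m_1+⋯+m_p < n` and
`(−1)^n·n!/∏(c_i)_{m_i}` if `m_1+⋯+m_p = n`;
(ii) Minton's formula for `p+2F_{p+1}(−n, d, c_1+m_1,…,c_p+m_p; d+1, c_1,…,c_p; 1)`. -/
theorem stmt11 {K : Type*} [Field K] [CharZero K]
    (p n : ℕ) (ms : ℕ → ℕ) (hm : (∑ i ∈ Finset.Icc 1 p, ms i) ≤ n)
    (c : ℕ → K) (d : K)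
    (hc : ∀ i, 1 ≤ i → i ≤ p → ∀ q : ℕ, q ≤ n - 1 → c i + (q : K) ≠ 0)
    (hd : ∀ q : ℕ, 1 ≤ q → q ≤ n → d + (q : K) ≠ 0) :
    ((∑ i ∈ Finset.Icc 1 p, ms i) < n →
      ∑ j ∈ Finset.range (n + 1),
        ((ascPochhammer K j).eval (-(n : K)) *
            ∏ i ∈ Finset.Icc 1 p, (ascPochhammer K j).eval (c i + (ms i : K))) /
          ((j.factorial : K) * ∏ i ∈ Finset.Icc 1 p, (ascPochhammer K j).eval (c i))
        = 0) ∧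
    ((∑ i ∈ Finset.Icc 1 p, ms i) = n →
      ∑ j ∈ Finset.range (n + 1),
        ((ascPochhammer K j).eval (-(n : K)) *
            ∏ i ∈ Finset.Icc 1 p, (ascPochhammer K j).eval (c i + (ms i : K))) /
          ((j.factorial : K) * ∏ i ∈ Finset.Icc 1 p, (ascPochhammer K j).eval (c i))
        = (-1) ^ n * (n.factorial : K) /
            ∏ i ∈ Finset.Icc 1 p, (ascPochhammer K (ms i)).eval (c i)) ∧
    (∑ j ∈ Finset.range (n + 1),
        ((ascPochhammer K j).eval (-(n : K)) * (ascPochhammer K j).eval d *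
            ∏ i ∈ Finset.Icc 1 p, (ascPochhammer K j).eval (c i + (ms i : K))) /
          ((j.factorial : K) * (ascPochhammer K j).eval (d + 1) *
            ∏ i ∈ Finset.Icc 1 p, (ascPochhammer K j).eval (c i))
      = (n.factorial : K) *
          (∏ i ∈ Finset.Icc 1 p, (ascPochhammer K (ms i)).eval (c i - d)) /
          ((ascPochhammer K n).eval (d + 1) *
            ∏ i ∈ Finset.Icc 1 p, (ascPochhammer K (ms i)).eval (c i))) := by
  have hcn : ∀ i ∈ Icc 1 p, (ascPochhammer K n).eval (c i) ≠ 0 := fun i hi =>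
    ascPochhammer_eval_ne_zero_iff.mpr fun q hq =>
      hc i (mem_Icc.mp hi).1 (mem_Icc.mp hi).2 q (by omega)
  have hdn : (ascPochhammer K n).eval (d + 1) ≠ 0 :=
    ascPochhammer_eval_ne_zero_iff.mpr fun q hq => by
      simpa [add_assoc, add_comm (1 : K)] using hd (q + 1) (by omega) (by omega)
  refine ⟨fun hlt => ?_, fun heq => ?_, sum_hypergeometric_minton hcn hm hdn⟩
  · rw [sum_hypergeometric_eq_coeff hcn hm,
      coeff_eq_zero_of_natDegree_lt (natDegree_pochhammerProd.trans_lt hlt)]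
    simp
  · have hlead : (pochhammerProd (Icc 1 p) c ms).coeff n = 1 := by
      rw [← heq, ← natDegree_pochhammerProd (c := c)]
      exact monic_pochhammerProd
    rw [sum_hypergeometric_eq_coeff hcn hm, hlead, mul_one]
end
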